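/- (Convergence of the Chebyshev iteration, Theorem 4.1.) Let n ≥ 2, let λ₁, …, λₙ ∈ ℂ, and let d, c, a ∈ ℂ with c ≠ 0. For z ∈ ℂ define W(z) = max(|z + √(z²−1)|, |z − √(z²−1)|), the modulus of the larger root of (w + w⁻¹)/2 = z. Assume that |λᵢ − d| ≤ |a| for every i ∈ {2, …, n} (i.e., the undesired eigenvalues lie in the ellipse E(d, c, a)). Then for every i ∈ {2, …, n}, the damping coefficient κᵢ = W((λᵢ − d)/c) / W((λ₁ − d)/c) satisfies κᵢ ≤ ( |a| + √(|a|² + |c|²) ) / | |λ₁ − d| + √(|λ₁ − d|² − |c|²) |, where √(|a|²+|c|²) is a real square root and √(|λ₁−d|²−|c|²) is the principal complex square root of the real number |λ₁−d|²−|c|² (the denominator is nonzero since it has modulus at least |c| > 0). -/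

import Mathlib

/-- The principal (arithmetic) complex square root: the square root with
positive real part, or with zero real part and nonnegative imaginary part. -/
noncomputable def csqrt (z : ℂ) : ℂ := z ^ (1 / 2 : ℂ)

/-- `W z` is the modulus of the larger root of the Joukowski equation
`(w + w⁻¹)/2 = z`, i.e. `max (|z + √(z²−1)|, |z − √(z²−1)|)`. -/
noncomputable def W (z : ℂ) : ℝ :=
  max (‖z + csqrt (z ^ 2 - 1)‖) (‖z - csqrt (z ^ 2 - 1)‖)

lemma csqrt_sq (z : ℂ) : csqrt z ^ 2 = z := by
  unfold csqrt
  rcases eq_or_ne z 0 with h | h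
  · simp [h, Complex.zero_cpow (by norm_num : (1/2:ℂ) ≠ 0)]
  · rw [sq, ← Complex.cpow_add _ _ h]
    norm_num

lemma joukowski (z : ℂ) :
    (z + csqrt (z ^ 2 - 1)) * (z - csqrt (z ^ 2 - 1)) = 1 := by
  have h := csqrt_sq (z ^ 2 - 1)
  linear_combination -h

lemma abs_mul_one (z : ℂ) :
    ‖z + csqrt (z ^ 2 - 1)‖ * ‖z - csqrt (z ^ 2 - 1)‖ = 1 := by
  rw [← norm_mul, joukowski, norm_one]

lemma one_le_W (z : ℂ) : 1 ≤ W z := by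
  have h := abs_mul_one z
  have h1 := norm_nonneg (z + csqrt (z ^ 2 - 1))
  have h2 := norm_nonneg (z - csqrt (z ^ 2 - 1))
  unfold W
  rcases le_total (‖z + csqrt (z ^ 2 - 1)‖) (‖z - csqrt (z ^ 2 - 1)‖) with hle | hle
  · rw [max_eq_right hle]; nlinarith
  · rw [max_eq_left hle]; nlinarith

lemma W_pos (z : ℂ) : 0 < W z := lt_of_lt_of_le one_pos (one_le_W z)

lemma W_add_inv (z : ℂ) : 2 * ‖z‖ ≤ W z + 1 / W z := by
  have h := abs_mul_one z
  set A := ‖z + csqrt (z ^ 2 - 1)‖ with hA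
  set B := ‖z - csqrt (z ^ 2 - 1)‖ with hB
  have hsum : 2 * ‖z‖ ≤ A + B := by
    have := norm_add_le (z + csqrt (z ^ 2 - 1)) (z - csqrt (z ^ 2 - 1))
    have h2 : (z + csqrt (z ^ 2 - 1)) + (z - csqrt (z ^ 2 - 1)) = 2 * z := by ring
    rw [h2] at this
    have h3 : ‖2 * z‖ = 2 * ‖z‖ := by
      rw [norm_mul]; simp
    linarith [h3 ▸ this]
  have hWpos := W_pos z
  have hmm : W z + 1 / W z = A + B := by
    unfold W
    rcases le_total A B with hle | hle
    · rw [max_eq_right hle]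
      have hB0 : B ≠ 0 := by intro h0; rw [h0, mul_zero] at h; norm_num at h
      have : (1:ℝ) / B = A := by field_simp; linarith [h]
      rw [this]; ring
    · rw [max_eq_left hle]
      have hA0 : A ≠ 0 := by intro h0; rw [h0, zero_mul] at h; norm_num at h
      have : (1:ℝ) / A = B := by field_simp; linarith [h]
      rw [this]
  linarith [hmm ▸ hsum]

lemma W_le (z : ℂ) : W z ≤ ‖z‖ + Real.sqrt (‖z‖ ^ 2 + 1) := by
  have hs : ‖csqrt (z ^ 2 - 1)‖ ≤ Real.sqrt (‖z‖ ^ 2 + 1) := by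
    have h1 : ‖csqrt (z ^ 2 - 1)‖ ^ 2 = ‖z ^ 2 - 1‖ := by
      rw [← norm_pow, csqrt_sq]
    have h2 : ‖z ^ 2 - 1‖ ≤ ‖z‖ ^ 2 + 1 := by
      calc ‖z ^ 2 - 1‖ ≤ ‖z ^ 2‖ + ‖1‖ :=
            norm_sub_le _ _
        _ = ‖z‖ ^ 2 + 1 := by rw [norm_pow, norm_one]
    have := Real.sqrt_le_sqrt (h1 ▸ h2 : ‖csqrt (z ^ 2 - 1)‖ ^ 2 ≤ ‖z‖ ^ 2 + 1)
    rwa [Real.sqrt_sq (norm_nonneg _)] at this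
  unfold W
  apply max_le
  · calc ‖z + csqrt (z ^ 2 - 1)‖ ≤ ‖z‖ + ‖csqrt (z ^ 2 - 1)‖ :=
        norm_add_le _ _
      _ ≤ _ := by linarith
  · calc ‖z - csqrt (z ^ 2 - 1)‖ ≤ ‖z‖ + ‖csqrt (z ^ 2 - 1)‖ :=
        norm_sub_le _ _
      _ ≤ _ := by linarith

lemma key_lower (M ρ : ℝ) (hM : 1 ≤ M) (h : 2 * ρ * M ≤ M ^ 2 + 1) (hρ : 1 ≤ ρ) :
    ρ + Real.sqrt (ρ ^ 2 - 1) ≤ M := by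
  set s := Real.sqrt (ρ ^ 2 - 1) with hsdef
  have hs : s ^ 2 = ρ ^ 2 - 1 := Real.sq_sqrt (by nlinarith)
  have hs0 : 0 ≤ s := Real.sqrt_nonneg _
  by_contra hcon
  push_neg at hcon
  have h1 : (ρ - s) * (ρ + s) = 1 := by nlinarith
  have h2 : ρ - s ≤ 1 := by nlinarith
  have hfac : 0 ≤ (M - ρ - s) * (M - ρ + s) := by nlinarith
  have hneg : M - ρ - s < 0 := by linarith
  have h3 : M - ρ + s ≤ 0 := by
    by_contra hp; push_neg at hp; nlinarith
  have h5 : M = 1 := le_antisymm (by linarith) hM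
  have h6 : ρ - s = 1 := le_antisymm h2 (by linarith)
  have h7 : ρ + s = 1 := by nlinarith
  linarith

lemma W_lower (z : ℂ) (h : 1 ≤ ‖z‖) :
    ‖z‖ + Real.sqrt (‖z‖ ^ 2 - 1) ≤ W z := by
  apply key_lower _ _ (one_le_W z) _ h
  have h1 := W_add_inv z
  have hp := W_pos z
  have h2 : (W z + 1 / W z) * W z = W z ^ 2 + 1 := by field_simp
  nlinarith

lemma sqrt_div_sq (x k : ℝ) (hx : 0 ≤ x) (hk : 0 < k) :
    Real.sqrt (x / k ^ 2) = Real.sqrt x / k := by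
  rw [Real.sqrt_div hx, Real.sqrt_sq hk.le]

lemma main_ineq (z1 z2 a c : ℂ) (hc : c ≠ 0) (hle : ‖z2‖ ≤ ‖a‖) :
    W (z2 / c) / W (z1 / c) ≤
      (‖a‖ + Real.sqrt ((‖a‖) ^ 2 + (‖c‖) ^ 2)) /
        ‖(‖z1‖ : ℂ) +
          csqrt (((‖z1‖) ^ 2 - (‖c‖) ^ 2 : ℝ) : ℂ)‖ := by
  set k := ‖c‖ with hkdef
  have hk0 : 0 < k := norm_pos_iff.mpr hc
  set r := ‖z1‖ with hrdef
  set u := ‖z2‖ with hudef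
  have hr0 : 0 ≤ r := norm_nonneg _
  have hu0 : 0 ≤ u := norm_nonneg _
  have ha0 : 0 ≤ ‖a‖ := norm_nonneg _
  set N := ‖a‖ + Real.sqrt ((‖a‖) ^ 2 + k ^ 2) with hNdef
  set s := csqrt (((r ^ 2 - k ^ 2 : ℝ)) : ℂ) with hsdef
  set D := ‖(r : ℂ) + s‖ with hDdef
  have habs2 : ‖z2 / c‖ = u / k := norm_div z2 c
  have habs1 : ‖z1 / c‖ = r / k := norm_div z1 c
  have hs2 : s ^ 2 = (((r ^ 2 - k ^ 2 : ℝ)) : ℂ) := csqrt_sq _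
  have hD0 : 0 ≤ D := norm_nonneg _
  clear_value k r u N s D
  -- numerator bound
  have hnum : W (z2 / c) ≤ N / k := by
    have h1 := W_le (z2 / c)
    rw [habs2] at h1
    have h2 : ((u / k) ^ 2 + 1) = (u ^ 2 + k ^ 2) / k ^ 2 := by field_simp
    have h3 : Real.sqrt ((u / k) ^ 2 + 1) = Real.sqrt (u ^ 2 + k ^ 2) / k := by
      rw [h2, sqrt_div_sq _ _ (by positivity) hk0]
    have h4 : Real.sqrt (u ^ 2 + k ^ 2) ≤ Real.sqrt ((‖a‖) ^ 2 + k ^ 2) :=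
      Real.sqrt_le_sqrt (by nlinarith)
    rw [h3, ← add_div] at h1
    refine h1.trans ?_
    rw [hNdef, div_le_div_iff₀ hk0 hk0]
    nlinarith
  -- denominator bounds
  have hden : 0 < D ∧ D ≤ k * W (z1 / c) := by
    rcases le_or_gt k r with hkr | hrk
    · -- real case: r ≥ k
      have ht0 : (0:ℝ) ≤ r ^ 2 - k ^ 2 := by nlinarith
      set t := r ^ 2 - k ^ 2 with htdef
      have hst : (s - (Real.sqrt t : ℂ)) * (s + (Real.sqrt t : ℂ)) = 0 := by
        have hw : ((Real.sqrt t : ℝ) : ℂ) ^ 2 = ((t : ℝ) : ℂ) := by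
          rw [← Complex.ofReal_pow, Real.sq_sqrt ht0]
        linear_combination hs2 - hw
      have hsqt_lt : Real.sqrt t < r := by
        have h5 : Real.sqrt t ≤ Real.sqrt (r ^ 2) := Real.sqrt_le_sqrt (by nlinarith)
        rw [Real.sqrt_sq hr0] at h5
        rcases h5.lt_or_eq with h | h
        · exact h
        · exfalso
          have := Real.sq_sqrt ht0
          rw [h] at this
          nlinarith
      have hDle : 0 < D ∧ D ≤ r + Real.sqrt t := by
        rcases mul_eq_zero.mp hst with h | h
        · have hseq : s = (Real.sqrt t : ℂ) := by linear_combination h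
          have : D = r + Real.sqrt t := by
            rw [hDdef, hseq, ← Complex.ofReal_add, Complex.norm_real, Real.norm_eq_abs,
              abs_of_nonneg (by positivity)]
          rw [this]
          constructor
          · nlinarith [Real.sqrt_nonneg t]
          · exact le_rfl
        · have hseq : s = -(Real.sqrt t : ℂ) := by linear_combination h
          have : D = r - Real.sqrt t := by
            rw [hDdef, hseq]
            rw [show (r : ℂ) + -(Real.sqrt t : ℂ) = ((r - Real.sqrt t : ℝ) : ℂ) by push_cast; ring]
            rw [Complex.norm_real, Real.norm_eq_abs, abs_of_nonneg (by linarith)]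
          rw [this]
          exact ⟨by linarith, by linarith [Real.sqrt_nonneg t]⟩
      have hρ : 1 ≤ ‖z1 / c‖ := by
        rw [habs1]; rw [le_div_iff₀ hk0]; linarith
      have hW := W_lower (z1 / c)  hρ
      rw [habs1] at hW
      have h6 : ((r / k) ^ 2 - 1) = t / k ^ 2 := by rw [htdef]; field_simp
      rw [h6, sqrt_div_sq _ _ (by positivity) hk0] at hW
      refine ⟨hDle.1, hDle.2.trans ?_⟩
      rw [show r + Real.sqrt t = k * (r / k + Real.sqrt t / k) by field_simp]
      exact mul_le_mul_of_nonneg_left hW hk0.le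
    · -- complex case: r < k
      have hcomp := hs2
      rw [Complex.ext_iff] at hcomp
      simp only [pow_two, Complex.mul_re, Complex.mul_im, Complex.ofReal_re,
        Complex.ofReal_im] at hcomp
      obtain ⟨hre, him⟩ := hcomp
      have hsre : s.re = 0 := by
        by_contra h
        have him' : s.im = 0 := by
          rcases mul_eq_zero.mp (by linarith : s.re * s.im = 0) with h' | h'
          · exact absurd h' h
          · exact h'
        rw [him'] at hre
        nlinarith
      have hD2 : D ^ 2 = k ^ 2 := by
        rw [hDdef, Complex.sq_norm, Complex.normSq_apply]
        simp only [Complex.add_re, Complex.add_im, Complex.ofReal_re, Complex.ofReal_im, hsre]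
        rw [hsre] at hre
        linear_combination -hre
      have hDk : D = k := by
        calc D = Real.sqrt (D ^ 2) := (Real.sqrt_sq hD0).symm
          _ = Real.sqrt (k ^ 2) := by rw [hD2]
          _ = k := Real.sqrt_sq hk0.le
      rw [hDk]
      refine ⟨hk0, ?_⟩
      calc k = k * 1 := (mul_one k).symm
        _ ≤ k * W (z1 / c) := mul_le_mul_of_nonneg_left (one_le_W _) hk0.le
  -- combine
  have hW1 := W_pos (z1 / c)
  have hfinal : W (z2 / c) / W (z1 / c) ≤ (N / k) / (D / k) := by
    have hN0 : 0 ≤ N := by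
      rw [hNdef]; positivity
    apply div_le_div₀ (div_nonneg hN0 hk0.le) hnum (div_pos hden.1 hk0)
    rw [div_le_iff₀ hk0]
    linarith [hden.2]
  refine hfinal.trans ?_
  have hDne : D ≠ 0 := ne_of_gt hden.1
  have hkne : k ≠ 0 := ne_of_gt hk0
  rw [show (N / k) / (D / k) = N / D by field_simp]


/-- Theorem 4.1 (convergence of the Chebyshev iteration): if all the undesired
eigenvalues `λ₂, …, λₙ` lie in the ellipse `E(d, c, a)` (so `|λᵢ − d| ≤ |a|`),
then every damping coefficient `κᵢ = W((λᵢ−d)/c) / W((λ₁−d)/c)` satisfies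
`κᵢ ≤ (|a| + √(|a|² + |c|²)) / ||λ₁−d| + √(|λ₁−d|² − |c|²)|`. -/
theorem stmt10 (n : ℕ) (hn : 2 ≤ n) (lam : Fin n → ℂ) (d c a : ℂ) (hc : c ≠ 0)
    (hcontain : ∀ i : Fin n, (i : ℕ) ≠ 0 → ‖lam i - d‖ ≤ ‖a‖) :
    ∀ i : Fin n, (i : ℕ) ≠ 0 →
      W ((lam i - d) / c) / W ((lam ⟨0, by omega⟩ - d) / c) ≤
        (‖a‖ + Real.sqrt ((‖a‖) ^ 2 + (‖c‖) ^ 2)) /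
          ‖(‖lam ⟨0, by omega⟩ - d‖ : ℂ) +
            csqrt (((‖lam ⟨0, by omega⟩ - d‖) ^ 2 - (‖c‖) ^ 2 : ℝ) : ℂ)‖ := by
  intro i hi
  exact main_ineq (lam ⟨0, by omega⟩ - d) (lam i - d) a c hc (hcontain i hi)
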